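/- Let h(x) = 1/(e^x − 1) for x > 0. Then for every natural number k ≥ 1 and every x > 0, the k-th derivative of h satisfies h^{(k)}(x) = Σ_{p=1}^{k} (−1)^p · S(k,p) · p! · e^{px}/(e^x − 1)^{p+1}. -/

import Mathlib

open Finset

/-- Stirling numbers of the second kind. -/
def S2 : ℕ → ℕ → ℕ
  | 0, 0 => 1
  | 0, _ + 1 => 0
  | _ + 1, 0 => 0
  | n + 1, k + 1 => S2 n k + (k + 1) * S2 n (k + 1)

lemma S2_eq_zero : ∀ {n k : ℕ}, n < k → S2 n k = 0 := by
  intro n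
  induction n with
  | zero => intro k h; cases k with
    | zero => omega
    | succ m => rfl
  | succ n ih =>
    intro k h
    cases k with
    | zero => omega
    | succ m =>
      show S2 n m + (m + 1) * S2 n (m + 1) = 0
      rw [ih (by omega), ih (by omega)]
      simp

lemma stirling_sum (k : ℕ) (T : ℕ → ℝ) :
    ∑ q ∈ Finset.range (k + 2), (S2 (k + 1) q : ℝ) * T q
      = ∑ p ∈ Finset.range (k + 1), (S2 k p : ℝ) * (p * T p + T (p + 1)) := by
  rw [Finset.sum_range_succ' _ (k + 1)]
  have h0 : (S2 (k + 1) 0 : ℝ) = 0 := by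
    show ((0 : ℕ) : ℝ) = 0; simp
  rw [h0, zero_mul, add_zero]
  have hstep : ∀ i ∈ Finset.range (k + 1),
      (S2 (k + 1) (i + 1) : ℝ) * T (i + 1)
        = (S2 k i : ℝ) * T (i + 1) + ((i : ℝ) + 1) * (S2 k (i + 1) : ℝ) * T (i + 1) := by
    intro i _
    show ((S2 k i + (i + 1) * S2 k (i + 1) : ℕ) : ℝ) * T (i + 1) = _
    push_cast
    ring
  rw [Finset.sum_congr rfl hstep, Finset.sum_add_distrib]
  have hrhs : ∀ p ∈ Finset.range (k + 1),
      (S2 k p : ℝ) * (p * T p + T (p + 1))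
        = (p : ℝ) * (S2 k p : ℝ) * T p + (S2 k p : ℝ) * T (p + 1) := by
    intro p _; ring
  rw [Finset.sum_congr rfl hrhs, Finset.sum_add_distrib]
  have key : ∑ i ∈ Finset.range (k + 1), ((i : ℝ) + 1) * (S2 k (i + 1) : ℝ) * T (i + 1)
      = ∑ p ∈ Finset.range (k + 1), (p : ℝ) * (S2 k p : ℝ) * T p := by
    rw [Finset.sum_range_succ' (fun p => (p : ℝ) * (S2 k p : ℝ) * T p) k,
      Finset.sum_range_succ]
    simp [S2_eq_zero (Nat.lt_succ_self k)]
  rw [key]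
  ring

lemma exp_sub_one_pos {x : ℝ} (hx : 0 < x) : 0 < Real.exp x - 1 := by
  have : (1 : ℝ) < Real.exp x := by
    calc (1 : ℝ) = Real.exp 0 := (Real.exp_zero).symm
    _ < Real.exp x := Real.exp_lt_exp.mpr hx
  linarith

lemma hasDerivAt_term (p : ℕ) (x : ℝ) (hx : 0 < x) :
    HasDerivAt (fun y => Real.exp (p * y) / (Real.exp y - 1) ^ (p + 1))
      ((p : ℝ) * (Real.exp (p * x) / (Real.exp x - 1) ^ (p + 1))
        - ((p : ℝ) + 1) * (Real.exp ((p + 1) * x) / (Real.exp x - 1) ^ (p + 2))) x := by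
  have hne : Real.exp x - 1 ≠ 0 := ne_of_gt (exp_sub_one_pos hx)
  have h1 : HasDerivAt (fun y : ℝ => Real.exp ((p : ℝ) * y)) (Real.exp ((p : ℝ) * x) * p) x := by
    have := ((hasDerivAt_id x).const_mul (p : ℝ)).exp
    simpa using this
  have h2 : HasDerivAt (fun y : ℝ => (Real.exp y - 1) ^ (p + 1))
      (((p : ℝ) + 1) * (Real.exp x - 1) ^ p * Real.exp x) x := by
    have := ((Real.hasDerivAt_exp x).sub_const 1).fun_pow (p + 1)
    simpa [Nat.add_sub_cancel] using this
  have h3 := h1.fun_div h2 (pow_ne_zero _ hne)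
  refine h3.congr_deriv ?_
  have hx1 : Real.exp (((p : ℝ) + 1) * x) = Real.exp ((p : ℝ) * x) * Real.exp x := by
    rw [← Real.exp_add]; ring_nf
  rw [hx1]
  field_simp
  ring

/-- Derivatives of `h(x) = 1/(e^x - 1)`. -/
theorem iteratedDeriv_h (k : ℕ) (hk : 1 ≤ k) (x : ℝ) (hx : 0 < x) :
    iteratedDeriv k (fun y => 1 / (Real.exp y - 1)) x
      = ∑ p ∈ Finset.Icc 1 k,
          (-1 : ℝ) ^ p * S2 k p * p.factorial *
            Real.exp (p * x) / (Real.exp x - 1) ^ (p + 1) := by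
  induction k, hk using Nat.le_induction generalizing x with
  | base =>
    have hne : Real.exp x - 1 ≠ 0 := ne_of_gt (exp_sub_one_pos hx)
    rw [iteratedDeriv_one]
    have hd := (hasDerivAt_const x (1 : ℝ)).fun_div ((Real.hasDerivAt_exp x).sub_const 1) hne
    rw [hd.deriv]
    have h11 : S2 1 1 = 1 := rfl
    simp [h11]
  | succ k hk ih =>
    have hne : Real.exp x - 1 ≠ 0 := ne_of_gt (exp_sub_one_pos hx)
    rw [iteratedDeriv_succ]
    have hEq : (iteratedDeriv k fun y => 1 / (Real.exp y - 1)) =ᶠ[nhds x]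
        (fun y => ∑ p ∈ Finset.Icc 1 k,
          (-1 : ℝ) ^ p * S2 k p * p.factorial *
            Real.exp (p * y) / (Real.exp y - 1) ^ (p + 1)) := by
      filter_upwards [Ioi_mem_nhds hx] with y hy
      exact ih y hy
    rw [hEq.deriv_eq]
    have hF : HasDerivAt (fun y => ∑ p ∈ Finset.Icc 1 k,
          (-1 : ℝ) ^ p * S2 k p * p.factorial *
            Real.exp (p * y) / (Real.exp y - 1) ^ (p + 1))
        (∑ p ∈ Finset.Icc 1 k,
          (-1 : ℝ) ^ p * S2 k p * p.factorial *
            ((p : ℝ) * (Real.exp (p * x) / (Real.exp x - 1) ^ (p + 1))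
              - ((p : ℝ) + 1) * (Real.exp ((p + 1) * x) / (Real.exp x - 1) ^ (p + 2)))) x := by
      apply HasDerivAt.fun_sum
      intro p _
      have := (hasDerivAt_term p x hx).const_mul
        ((-1 : ℝ) ^ p * S2 k p * p.factorial)
      simpa [mul_div_assoc] using this
    rw [hF.deriv]
    -- now purely algebraic
    set T : ℕ → ℝ := fun q =>
      (-1 : ℝ) ^ q * q.factorial * (Real.exp (q * x) / (Real.exp x - 1) ^ (q + 1)) with hT
    have hrange1 : Finset.range (k + 2) = insert 0 (Finset.Icc 1 (k + 1)) := by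
      ext a; simp; omega
    have hrange2 : Finset.range (k + 1) = insert 0 (Finset.Icc 1 k) := by
      ext a; simp; omega
    have hS2k0 : (S2 k 0 : ℝ) = 0 := by
      obtain ⟨m, rfl⟩ := Nat.exists_eq_succ_of_ne_zero (Nat.one_le_iff_ne_zero.mp hk)
      show ((0 : ℕ) : ℝ) = 0
      simp
    have hA : (∑ p ∈ Finset.Icc 1 (k + 1),
          (-1 : ℝ) ^ p * S2 (k + 1) p * p.factorial *
            Real.exp (p * x) / (Real.exp x - 1) ^ (p + 1))
        = ∑ q ∈ Finset.range (k + 2), (S2 (k + 1) q : ℝ) * T q := by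
      rw [hrange1, Finset.sum_insert (by simp)]
      have h0 : (S2 (k + 1) 0 : ℝ) * T 0 = 0 := by
        have : (S2 (k + 1) 0 : ℝ) = 0 := by
          show ((0 : ℕ) : ℝ) = 0; simp
        rw [this, zero_mul]
      rw [h0, zero_add]
      refine Finset.sum_congr rfl fun p _ => ?_
      simp only [hT]
      ring
    have hB : (∑ p ∈ Finset.Icc 1 k,
          (-1 : ℝ) ^ p * S2 k p * p.factorial *
            ((p : ℝ) * (Real.exp (p * x) / (Real.exp x - 1) ^ (p + 1))
              - ((p : ℝ) + 1) * (Real.exp ((p + 1) * x) / (Real.exp x - 1) ^ (p + 2))))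
        = ∑ p ∈ Finset.range (k + 1), (S2 k p : ℝ) * (p * T p + T (p + 1)) := by
      rw [hrange2, Finset.sum_insert (by simp), hS2k0, zero_mul, zero_add]
      refine Finset.sum_congr rfl fun p _ => ?_
      simp only [hT]
      push_cast [Nat.factorial_succ, pow_succ]
      ring
    rw [hB, hA, stirling_sum k T]
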